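/- arXiv:1608.03680 — 8 statements merged into one kernel-verified Lean document; each statement's English description precedes it below -/
import Mathlib

section
/- Let V be a finite set of weighted points in the plane, x a point, and R > 0. Define W*(x) as the maximum over all y with dist(x,y) ≥ R of the total weight of points v ∈ V with dist(v,y) < dist(v,x). Then this maximum is attained by some point y with dist(x,y) = R exactly. -/
open scoped RealInnerProductSpace

noncomputable section

/-- The Euclidean plane. -/
abbrev Plane := EuclideanSpace ℝ (Fin 2)

/-- The point of the plane with coordinates `(a, b)`. -/
def pt (a b : ℝ) : Plane := (WithLp.equiv 2 (Fin 2 → ℝ)).symm ![a, b]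

/-- `Wcap V w x y` = total weight of customers in `V` strictly closer to `y` than to `x`. -/
def Wcap (V : Finset Plane) (w : Plane → ℝ) (x y : Plane) : ℝ :=
  ∑ v ∈ V, if dist v y < dist v x then w v else 0

/-- `Wstar V w R x` = the weight loss of `x`: the supremum of captures over feasible
follower positions `y` with `dist x y ≥ R`. -/
def Wstar (V : Finset Plane) (w : Plane → ℝ) (R : ℝ) (x : Plane) : ℝ :=
  sSup (Wcap V w x '' {y : Plane | R ≤ dist x y})

/-- Unit direction of polar angle `θ`. -/
def dir (θ : ℝ) : Plane := pt (Real.cos θ) (Real.sin θ)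

/-- `Wang V w R x θ` = capture of the follower placed at `x + R•(cos θ, sin θ)` against `x`. -/
def Wang (V : Finset Plane) (w : Plane → ℝ) (R : ℝ) (x : Plane) (θ : ℝ) : ℝ :=
  Wcap V w x (x + R • dir θ)

/-- The weight loss of `x`, as the supremum of captures over the circle of radius `R`. -/
def WstarC (V : Finset Plane) (w : Plane → ℝ) (R : ℝ) (x : Plane) : ℝ :=
  sSup (Set.range (Wang V w R x))

/-!
Captures take only finitely many values, so some feasible `y₀` maximises them. Sliding `y₀`
along the segment towards `x` until it hits the circle of radius `R` loses no customer: if `v`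
is strictly closer to `y₀` than to `x`, convexity of the norm makes it strictly closer to every
point of the segment `(x, y₀]` as well, and weights are positive.
-/

open AffineMap

theorem dist_lineMap_lt_of_dist_lt {E : Type*} [NormedAddCommGroup E] [NormedSpace ℝ E]
    {v x y : E} {t : ℝ} (h : dist v y < dist v x) (ht₀ : 0 < t) (ht₁ : t ≤ 1) :
    dist v (lineMap x y t) < dist v x := by
  have hsplit : v - lineMap x y t = (1 - t) • (v - x) + t • (v - y) := by
    rw [lineMap_apply_module]; module
  rw [dist_eq_norm, dist_eq_norm] at h ⊢
  calc ‖v - lineMap x y t‖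
      ≤ ‖(1 - t) • (v - x)‖ + ‖t • (v - y)‖ := hsplit ▸ norm_add_le _ _
    _ = (1 - t) * ‖v - x‖ + t * ‖v - y‖ := by
        rw [norm_smul, norm_smul, Real.norm_of_nonneg (sub_nonneg.2 ht₁),
          Real.norm_of_nonneg ht₀.le]
    _ < ‖v - x‖ := by nlinarith

theorem Wcap_eq_sum_filter (V : Finset Plane) (w : Plane → ℝ) (x y : Plane) :
    Wcap V w x y = ∑ v ∈ V with dist v y < dist v x, w v :=
  (Finset.sum_filter _ _).symm

theorem finite_range_Wcap (V : Finset Plane) (w : Plane → ℝ) (x : Plane) :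
    (Set.range (Wcap V w x)).Finite := by
  refine ((V.powerset.image fun S ↦ ∑ v ∈ S, w v).finite_toSet).subset ?_
  rintro _ ⟨y, rfl⟩
  simp only [Finset.coe_image, Set.mem_image, Finset.mem_coe, Finset.mem_powerset]
  exact ⟨_, Finset.filter_subset _ V, (Wcap_eq_sum_filter V w x y).symm⟩

theorem exists_forall_Wcap_le (V : Finset Plane) (w : Plane → ℝ) (x : Plane)
    {S : Set Plane} (hS : S.Nonempty) :
    ∃ y ∈ S, ∀ y' ∈ S, Wcap V w x y' ≤ Wcap V w x y := by
  obtain ⟨_, ⟨y, hy, rfl⟩, hmax⟩ := Set.exists_max_image _ id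
    ((finite_range_Wcap V w x).subset (Set.image_subset_range _ S)) (hS.image _)
  exact ⟨y, hy, Set.forall_mem_image.1 hmax⟩

theorem Wcap_le_Wcap_lineMap {V : Finset Plane} {w : Plane → ℝ} (hw : ∀ v ∈ V, 0 ≤ w v)
    (x y : Plane) {t : ℝ} (ht₀ : 0 < t) (ht₁ : t ≤ 1) :
    Wcap V w x y ≤ Wcap V w x (lineMap x y t) := by
  rw [Wcap_eq_sum_filter, Wcap_eq_sum_filter]
  refine Finset.sum_le_sum_of_subset_of_nonneg ?_ fun v hv _ ↦ hw v (Finset.mem_filter.1 hv).1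
  exact Finset.monotone_filter_right V fun v _ h ↦ dist_lineMap_lt_of_dist_lt h ht₀ ht₁

/-- the maximum capture over all feasible follower positions (at distance
at least `R` from `x`) is attained at some point exactly at distance `R` from `x`. -/
theorem stmt_1 (V : Finset Plane) (w : Plane → ℝ) (hw : ∀ v ∈ V, 0 < w v)
    (R : ℝ) (hR : 0 < R) (x : Plane) :
    ∃ y : Plane, dist x y = R ∧
      ∀ y' : Plane, R ≤ dist x y' → Wcap V w x y' ≤ Wcap V w x y := by
  have hfeasible : {y : Plane | R ≤ dist x y}.Nonempty := by
    obtain ⟨y, hy⟩ := (NormedSpace.sphere_nonempty (x := x)).2 hR.le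
    exact ⟨y, (dist_comm x y ▸ Metric.mem_sphere.1 hy).ge⟩
  obtain ⟨y₀, hy₀ : R ≤ dist x y₀, hmax⟩ := exists_forall_Wcap_le V w x hfeasible
  have hd : 0 < dist x y₀ := hR.trans_le hy₀
  refine ⟨lineMap x y₀ (R / dist x y₀), ?_, fun y' hy' ↦ (hmax y' hy').trans ?_⟩
  · rw [dist_left_lineMap, Real.norm_of_nonneg (div_pos hR hd).le, div_mul_cancel₀ _ hd.ne']
  · exact Wcap_le_Wcap_lineMap (fun v hv ↦ (hw v hv).le) x y₀ (div_pos hR hd) ((div_le_one hd).2 hy₀)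
end
end

section
/- Let S be a finite set of weighted points in the plane and R > 0. If a point x lies outside the convex hull of the union of the closed disks of radius R/2 centered at points of S, then there exists a point y with dist(x,y) ≥ R such that every v ∈ S satisfies dist(v,y) < dist(v,x); consequently W*(x) ≥ W(S). -/
/-!
Let `p` be the point of `conv S` nearest to `x` and `d = dist x p`. If `d ≤ R/2`, translating
`conv S` by `x - p` puts `x` inside the convex hull of the disks, so `d > R/2`. Every `v ∈ conv S`
lies in the half-space `⟪x - p, v - p⟫ ≤ 0`, hence moving from `x` towards `p` by any distance
`t ∈ (0, 2d)` brings it strictly closer to `v`; take `t = R`.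
-/

open scoped RealInnerProductSpace

noncomputable section

open scoped Pointwise
open Metric

theorem mem_convexHull_iUnion_closedBall_of_dist_le {E : Type*} [SeminormedAddCommGroup E]
    [Module ℝ E] {s : Set E} {x p : E} {r : ℝ} (hp : p ∈ convexHull ℝ s) (hxp : dist x p ≤ r) :
    x ∈ convexHull ℝ (⋃ v ∈ s, closedBall v r) := by
  have hx : x ∈ convexHull ℝ ((x - p) +ᵥ s) := by
    rw [convexHull_vadd]
    exact ⟨p, hp, by simp⟩
  refine convexHull_mono ?_ hx
  rintro _ ⟨v, hv, rfl⟩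
  exact Set.mem_biUnion hv (by simpa [dist_eq_norm] using hxp)

section InnerProductSpace

variable {E : Type*} [NormedAddCommGroup E] [InnerProductSpace ℝ E]

theorem dist_lineMap_lt_of_inner_le_zero {x p v : E} {t : ℝ} (hxp : x ≠ p) (ht₀ : 0 < t)
    (ht₂ : t < 2) (hv : ⟪x - p, v - p⟫ ≤ 0) :
    dist v (AffineMap.lineMap x p t) < dist v x := by
  have hinner : ‖p - x‖ ^ 2 ≤ ⟪v - x, p - x⟫ := by
    rw [show v - x = (v - p) + (p - x) by abel, inner_add_left, real_inner_self_eq_norm_sq,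
      ← neg_sub x p, inner_neg_right, real_inner_comm]
    linarith
  have hpos : 0 < ‖p - x‖ := norm_pos_iff.mpr (sub_ne_zero.mpr hxp.symm)
  rw [dist_eq_norm, dist_eq_norm, AffineMap.lineMap_apply_module',
    show v - (t • (p - x) + x) = (v - x) - t • (p - x) by abel]
  refine lt_of_pow_lt_pow_left₀ 2 (norm_nonneg _) ?_
  rw [norm_sub_sq_real, real_inner_smul_right, norm_smul, Real.norm_eq_abs, abs_of_pos ht₀]
  -- the new squared distance is at most `‖v - x‖² - t (2 - t) ‖p - x‖²`
  nlinarith [mul_pos (mul_pos ht₀ (sub_pos.mpr ht₂)) (pow_pos hpos 2)]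

theorem exists_dist_eq_forall_dist_lt_of_notMem_convexHull_iUnion_closedBall [Nontrivial E]
    (S : Finset E) {R : ℝ} (hR : 0 < R) {x : E}
    (hx : x ∉ convexHull ℝ (⋃ v ∈ S, closedBall v (R / 2))) :
    ∃ y, dist x y = R ∧ ∀ v ∈ S, dist v y < dist v x := by
  rcases S.eq_empty_or_nonempty with rfl | hS
  · obtain ⟨z, hz⟩ := exists_norm_eq E hR.le
    exact ⟨x + z, by simp [hz], by simp⟩
  set K := convexHull ℝ (S : Set E)
  have hKconv : Convex ℝ K := convex_convexHull ℝ _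
  obtain ⟨p, hpK, hpmin⟩ := exists_norm_eq_iInf_of_complete_convex
    ((Finset.coe_nonempty.mpr hS).mono (subset_convexHull ℝ _))
    (S.finite_toSet.isCompact_convexHull ℝ).isComplete hKconv x
  have hproj := (norm_eq_iInf_iff_real_inner_le_zero hKconv hpK).mp hpmin
  have hfar : R / 2 < dist x p := by
    by_contra! h
    exact hx (mem_convexHull_iUnion_closedBall_of_dist_le hpK h)
  have hd : 0 < dist x p := by linarith
  refine ⟨AffineMap.lineMap x p (R / dist x p), ?_, fun v hv => ?_⟩
  · rw [dist_left_lineMap, Real.norm_eq_abs, abs_of_pos (by positivity), div_mul_cancel₀ _ hd.ne']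
  · refine dist_lineMap_lt_of_inner_le_zero (dist_pos.mp hd) (by positivity) ?_
      (hproj v (subset_convexHull ℝ _ hv))
    rw [div_lt_iff₀ hd]
    linarith

end InnerProductSpace

theorem sum_le_Wcap_of_forall_dist_lt {V S : Finset Plane} (hSV : S ⊆ V) {w : Plane → ℝ}
    (hw : ∀ v ∈ V, 0 ≤ w v) {x y : Plane} (hy : ∀ v ∈ S, dist v y < dist v x) :
    ∑ v ∈ S, w v ≤ Wcap V w x y :=
  calc ∑ v ∈ S, w v = ∑ v ∈ S, if dist v y < dist v x then w v else 0 :=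
        Finset.sum_congr rfl fun v hv => (if_pos (hy v hv)).symm
    _ ≤ Wcap V w x y :=
        Finset.sum_le_sum_of_subset_of_nonneg hSV fun v hv _ => by
          split_ifs
          exacts [hw v hv, le_rfl]

/-- if `x` is outside the convex hull of the disks of radius `R/2` around
the points of `S`, then some feasible follower position captures all of `S`, hence
captures weight at least `W(S)`. -/
theorem stmt_2 (V S : Finset Plane) (hSV : S ⊆ V) (w : Plane → ℝ) (hw : ∀ v ∈ V, 0 < w v)
    (R : ℝ) (hR : 0 < R) (x : Plane)
    (hx : x ∉ convexHull ℝ (⋃ v ∈ S, Metric.closedBall v (R / 2))) :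
    ∃ y : Plane, R ≤ dist x y ∧ (∀ v ∈ S, dist v y < dist v x) ∧
      (∑ v ∈ S, w v) ≤ Wcap V w x y := by
  obtain ⟨y, hxy, hy⟩ :=
    exists_dist_eq_forall_dist_lt_of_notMem_convexHull_iUnion_closedBall S hR hx
  exact ⟨y, hxy.ge, hy, sum_le_Wcap_of_forall_dist_lt hSV (fun v hv => (hw v hv).le) hy⟩
end
end

section
/- If a point x lies inside CH(𝒞(S)) (the convex hull of the closed disks of radius R/2 centered at points of S), then for every point y with dist(x,y) ≥ R there exists v ∈ S with dist(v,y) ≥ dist(v,x); i.e., no feasible y captures all of S. -/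
/-!
If `y` captured every `v ∈ S`, then `S` would lie in the open half-plane of points closer to `y`
than to `x`, bounded by the perpendicular bisector of `xy`. Pushing that half-plane outwards by
`R / 2` it still contains every disk of radius `R / 2` around `S`, hence their convex hull and `x`.
But `x` is at distance `dist x y / 2 ≥ R / 2` from the bisector, so it lies outside.
-/

open scoped RealInnerProductSpace

noncomputable section

section InnerProductSpace

variable {E : Type*} [NormedAddCommGroup E] [InnerProductSpace ℝ E]

theorem two_inner_sub_lt_of_dist_lt {v x y : E} (h : dist v y < dist v x) :
    2 * ⟪v, x - y⟫ < ‖x‖ ^ 2 - ‖y‖ ^ 2 := by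
  rw [dist_eq_norm, dist_eq_norm] at h
  have hsq : ‖v - y‖ ^ 2 < ‖v - x‖ ^ 2 := pow_lt_pow_left₀ h (norm_nonneg _) two_ne_zero
  rw [norm_sub_sq_real, norm_sub_sq_real] at hsq
  rw [inner_sub_right]
  linarith

theorem two_inner_self_sub (x y : E) :
    2 * ⟪x, x - y⟫ = ‖x‖ ^ 2 - ‖y‖ ^ 2 + ‖x - y‖ ^ 2 := by
  rw [inner_sub_right, real_inner_self_eq_norm_sq, norm_sub_sq_real]
  ring

theorem inner_le_add_mul_norm_of_mem_closedBall {p v : E} {r : ℝ} (u : E)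
    (hp : p ∈ Metric.closedBall v r) : ⟪p, u⟫ ≤ ⟪v, u⟫ + r * ‖u‖ := by
  have hpv : ‖p - v‖ ≤ r := by rwa [Metric.mem_closedBall, dist_eq_norm] at hp
  calc ⟪p, u⟫ = ⟪v, u⟫ + ⟪p - v, u⟫ := by rw [← inner_add_left, add_sub_cancel]
    _ ≤ ⟪v, u⟫ + ‖p - v‖ * ‖u‖ := by gcongr; exact real_inner_le_norm _ _
    _ ≤ ⟪v, u⟫ + r * ‖u‖ := by gcongr

theorem inner_lt_of_mem_convexHull_iUnion_closedBall {S : Set E} {r b : ℝ} {p : E} (u : E)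
    (hS : ∀ v ∈ S, ⟪v, u⟫ + r * ‖u‖ < b)
    (hp : p ∈ convexHull ℝ (⋃ v ∈ S, Metric.closedBall v r)) : ⟪p, u⟫ < b := by
  have hconvex : Convex ℝ {q : E | ⟪q, u⟫ < b} :=
    convex_halfSpace_lt ⟨fun q q' => inner_add_left q q' u, fun c q => real_inner_smul_left q u c⟩ b
  refine convexHull_min ?_ hconvex hp
  intro q hq
  simp only [Set.mem_iUnion] at hq
  obtain ⟨v, hv, hqv⟩ := hq
  exact (inner_le_add_mul_norm_of_mem_closedBall u hqv).trans_lt (hS v hv)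

end InnerProductSpace

theorem stmt_4_general (S : Finset Plane) (R : ℝ) (x : Plane)
    (hx : x ∈ convexHull ℝ (⋃ v ∈ S, Metric.closedBall v (R / 2))) :
    ∀ y : Plane, R ≤ dist x y → ∃ v ∈ S, dist v x ≤ dist v y := by
  intro y hy
  by_contra! hcapture
  rw [dist_eq_norm] at hy
  have hx_inside : ⟪x, x - y⟫ < (‖x‖ ^ 2 - ‖y‖ ^ 2 + R * ‖x - y‖) / 2 := by
    refine inner_lt_of_mem_convexHull_iUnion_closedBall (x - y) (fun v hv => ?_) hx
    linarith [two_inner_sub_lt_of_dist_lt (hcapture v hv)]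
  have hfar : R * ‖x - y‖ ≤ ‖x - y‖ ^ 2 := by
    rw [sq]; exact mul_le_mul_of_nonneg_right hy (norm_nonneg _)
  linarith [two_inner_self_sub x y]

/-- if `x` lies inside `CH(𝒞(S))`, then no feasible follower position
captures all of `S`. -/
theorem stmt_4 (S : Finset Plane) (R : ℝ) (hR : 0 < R) (x : Plane)
    (hx : x ∈ convexHull ℝ (⋃ v ∈ S, Metric.closedBall v (R / 2))) :
    ∀ y : Plane, R ≤ dist x y → ∃ v ∈ S, dist v x ≤ dist v y :=
  stmt_4_general S R x hx
end
end

section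
/- Assume the leader is at x and y realizes W*(x) with dist(x,y) = R; let F be the line through x parallel to the perpendicular bisector B(x,y). Then for any point x' lying on the closed side of F not containing y (i.e., x' ∉ H⁻(F, y)), the point y' at distance R from x' in the same direction (y' = x' + (y − x)) is feasible for x' and satisfies W(y'|x') ≥ W(y|x); hence W*(x') ≥ W*(x). -/
/-! A customer `v` prefers `x + t` to `x` iff `‖t‖² < 2⟪v - x, t⟫`, a condition that only gets
weaker as `x` moves against `t`. So translating the optimal pair `(x, x + R • u)` to any `x'` behind
the line `F` keeps every captured customer, and `W*(x) = W(y|x) ≤ W(y'|x') ≤ W*(x')`. -/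

open scoped RealInnerProductSpace

noncomputable section

section Translate

variable {E : Type*} [NormedAddCommGroup E] [InnerProductSpace ℝ E]

lemma dist_add_lt_dist_iff (v x t : E) :
    dist v (x + t) < dist v x ↔ ‖t‖ ^ 2 < 2 * ⟪v - x, t⟫ := by
  have hsq : dist v (x + t) ^ 2 = dist v x ^ 2 - 2 * ⟪v - x, t⟫ + ‖t‖ ^ 2 := by
    rw [dist_eq_norm, dist_eq_norm, sub_add_eq_sub_sub, norm_sub_sq_real]
  rw [← pow_lt_pow_iff_left₀ dist_nonneg dist_nonneg two_ne_zero, hsq]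
  constructor <;> intro h <;> linarith

lemma dist_add_lt_dist_of_inner_nonpos {v x x' t : E} (hx' : ⟪x' - x, t⟫ ≤ 0)
    (h : dist v (x + t) < dist v x) : dist v (x' + t) < dist v x' := by
  have hinner : ⟪v - x', t⟫ = ⟪v - x, t⟫ - ⟪x' - x, t⟫ := by
    rw [← inner_sub_left, sub_sub_sub_cancel_right]
  rw [dist_add_lt_dist_iff] at h ⊢
  linarith

end Translate

section Capture

variable {V : Finset Plane} {w : Plane → ℝ}

lemma Wcap_le_Wcap (hw : ∀ v ∈ V, 0 ≤ w v) {x y x' y' : Plane}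
    (h : ∀ v ∈ V, dist v y < dist v x → dist v y' < dist v x') :
    Wcap V w x y ≤ Wcap V w x' y' := by
  refine Finset.sum_le_sum fun v hv => ?_
  by_cases hv' : dist v y < dist v x
  · simp only [hv', h v hv hv', if_true, le_refl]
  · simp only [hv', if_false]
    split_ifs
    exacts [hw v hv, le_rfl]

lemma Wcap_le_sum_weight (hw : ∀ v ∈ V, 0 ≤ w v) (x y : Plane) :
    Wcap V w x y ≤ ∑ v ∈ V, w v :=
  Finset.sum_le_sum fun v hv => by split_ifs <;> simp [hw v hv]

lemma Wcap_le_Wstar (hw : ∀ v ∈ V, 0 ≤ w v) {R : ℝ} {x y : Plane} (hy : R ≤ dist x y) :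
    Wcap V w x y ≤ Wstar V w R x := by
  refine le_csSup ⟨∑ v ∈ V, w v, ?_⟩ ⟨y, hy, rfl⟩
  rintro _ ⟨z, -, rfl⟩
  exact Wcap_le_sum_weight hw x z

lemma Wstar_eq_Wcap_of_forall_le {R : ℝ} {x y₀ : Plane} (hy₀ : R ≤ dist x y₀)
    (hmax : ∀ y, R ≤ dist x y → Wcap V w x y ≤ Wcap V w x y₀) :
    Wstar V w R x = Wcap V w x y₀ :=
  IsGreatest.csSup_eq ⟨⟨y₀, hy₀, rfl⟩, by rintro _ ⟨y, hy, rfl⟩; exact hmax y hy⟩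

end Capture

/-- pruning lemma. If `y = x + R•u` realizes `W*(x)` and `x'` lies on the
closed side of the line through `x` perpendicular to `u` away from `y`, then
`y' = x' + R•u` is feasible for `x'`, captures at least as much, and `W*(x') ≥ W*(x)`. -/
theorem stmt_6 (V : Finset Plane) (w : Plane → ℝ) (hw : ∀ v ∈ V, 0 < w v)
    (R : ℝ) (hR : 0 < R) (x u : Plane) (hu : ‖u‖ = 1)
    (hmax : ∀ y' : Plane, R ≤ dist x y' → Wcap V w x y' ≤ Wcap V w x (x + R • u))
    (x' : Plane) (hx' : ⟪x' - x, u⟫ ≤ 0) :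
    dist x' (x' + R • u) = R ∧
    Wcap V w x (x + R • u) ≤ Wcap V w x' (x' + R • u) ∧
    Wstar V w R x ≤ Wstar V w R x' := by
  have hw₀ : ∀ v ∈ V, 0 ≤ w v := fun v hv => (hw v hv).le
  have hdist : ∀ z : Plane, dist z (z + R • u) = R := fun z => by
    rw [dist_self_add_right, norm_smul, hu, mul_one, Real.norm_of_nonneg hR.le]
  have hside : ⟪x' - x, R • u⟫ ≤ 0 := by
    rw [real_inner_smul_right]
    exact mul_nonpos_of_nonneg_of_nonpos hR.le hx'
  have hcap : Wcap V w x (x + R • u) ≤ Wcap V w x' (x' + R • u) :=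
    Wcap_le_Wcap hw₀ fun _ _ => dist_add_lt_dist_of_inner_nonpos hside
  refine ⟨hdist x', hcap, ?_⟩
  rw [Wstar_eq_Wcap_of_forall_le (hdist x).ge hmax]
  exact hcap.trans (Wcap_le_Wstar hw₀ (hdist x').ge)
end
end

section
/- If x is a point whose set of maximizing directions MA(x) is not contained in any closed half-circle (equivalently, the minimal arc CA(x) covering MA(x) has angular span > π), then x is a (1|1)_R-centroid: W*(x) ≤ W*(x') for every point x'. -/
open scoped RealInnerProductSpace

noncomputable section

/-!
A follower that captures `v` from `x` with displacement `d` is on the far side of the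
perpendicular bisector of `x` and `x + d`, i.e. `‖d‖² / 2 < ⟪v - x, d⟫`. Moving the leader
from `x` to a point `x'` behind it (`⟪x' - x, d⟫ ≤ 0`) only increases `⟪v - x', d⟫`, so the
follower `x' + d` captures at least as much from `x'` as `x + d` does from `x`. If the
maximizing directions at `x` lie in no closed half-circle, every `x'` is behind `x` for some
maximizing direction `θ`, whence `W*(x) = W(x, θ) ≤ W(x', θ) ≤ W*(x')`.
-/

theorem dist_add_lt_dist_iff_s11 {E : Type*} [NormedAddCommGroup E] [InnerProductSpace ℝ E]
    (x y d : E) : dist y (x + d) < dist y x ↔ ‖d‖ ^ 2 / 2 < ⟪y - x, d⟫ := by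
  rw [dist_eq_norm, dist_eq_norm, show y - (x + d) = (y - x) - d by abel,
    ← sq_lt_sq₀ (norm_nonneg _) (norm_nonneg _), norm_sub_sq_real]
  constructor <;> intro h <;> linarith

theorem inner_dir (u : Plane) (θ : ℝ) : ⟪u, dir θ⟫ = u 0 * Real.cos θ + u 1 * Real.sin θ := by
  simp only [dir, pt, WithLp.equiv_symm_apply, PiLp.inner_apply, RCLike.inner_apply,
    Real.ringHom_apply, Fin.sum_univ_two, Fin.isValue, Matrix.cons_val_zero, Matrix.cons_val_one,
    Matrix.cons_val_fin_one]
  ring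

theorem exists_polar_inner_dir (u : Plane) :
    ∃ r ≥ 0, ∃ φ : ℝ, ∀ θ : ℝ, ⟪u, dir θ⟫ = r * Real.cos (θ - φ) := by
  set z : ℂ := ⟨u 0, u 1⟩
  refine ⟨‖z‖, norm_nonneg z, z.arg, fun θ => ?_⟩
  have h0 : u 0 = ‖z‖ * Real.cos z.arg := (Complex.norm_mul_cos_arg z).symm
  have h1 : u 1 = ‖z‖ * Real.sin z.arg := (Complex.norm_mul_sin_arg z).symm
  rw [inner_dir, h0, h1, Real.cos_sub]
  ring

section Capture

variable {V : Finset Plane} {w : Plane → ℝ}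

theorem Wcap_le_Wcap_of_inner_nonpos (hw : ∀ v ∈ V, 0 ≤ w v) {x x' d : Plane}
    (hbehind : ⟪x' - x, d⟫ ≤ 0) : Wcap V w x (x + d) ≤ Wcap V w x' (x' + d) := by
  refine Finset.sum_le_sum fun v hv => ?_
  by_cases hcap : dist v (x + d) < dist v x
  · have hcap' : dist v (x' + d) < dist v x' := by
      rw [dist_add_lt_dist_iff_s11] at hcap ⊢
      have : ⟪v - x', d⟫ = ⟪v - x, d⟫ - ⟪x' - x, d⟫ := by
        rw [← inner_sub_left, sub_sub_sub_cancel_right]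
      linarith
    rw [if_pos hcap, if_pos hcap']
  · rw [if_neg hcap]
    split_ifs
    exacts [hw v hv, le_rfl]

theorem bddAbove_range_Wang (hw : ∀ v ∈ V, 0 ≤ w v) (R : ℝ) (x : Plane) :
    BddAbove (Set.range (Wang V w R x)) := by
  refine ⟨∑ v ∈ V, w v, ?_⟩
  rintro _ ⟨θ, rfl⟩
  refine Finset.sum_le_sum fun v hv => ?_
  split_ifs
  exacts [le_rfl, hw v hv]

end Capture

theorem stmt_11_general (V : Finset Plane) (w : Plane → ℝ) (hw : ∀ v ∈ V, 0 < w v)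
    (R : ℝ) (x : Plane)
    (hMA : ∀ φ : ℝ, ∃ θ : ℝ,
      (∀ θ' : ℝ, Wang V w R x θ' ≤ Wang V w R x θ) ∧ Real.cos (θ - φ) < 0) :
    ∀ x' : Plane, WstarC V w R x ≤ WstarC V w R x' := by
  intro x'
  have hw₀ : ∀ v ∈ V, 0 ≤ w v := fun v hv => (hw v hv).le
  obtain ⟨r, hr, φ, hpolar⟩ := exists_polar_inner_dir (R • (x' - x))
  obtain ⟨θ, hmax, hcos⟩ := hMA φ
  have hbehind : ⟪x' - x, R • dir θ⟫ ≤ 0 := by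
    rw [real_inner_smul_right, ← real_inner_smul_left, hpolar]
    exact mul_nonpos_of_nonneg_of_nonpos hr hcos.le
  calc WstarC V w R x ≤ Wang V w R x θ :=
        csSup_le (Set.range_nonempty _) (Set.forall_mem_range.2 hmax)
    _ ≤ Wang V w R x' θ := Wcap_le_Wcap_of_inner_nonpos hw₀ hbehind
    _ ≤ WstarC V w R x' := le_csSup (bddAbove_range_Wang hw₀ R x') ⟨θ, rfl⟩

/-- if the maximizing directions of `x` are not contained in any closed
half-circle, then `x` is a `(1|1)_R`-centroid. -/
theorem stmt_11 (V : Finset Plane) (w : Plane → ℝ) (hw : ∀ v ∈ V, 0 < w v)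
    (R : ℝ) (hR : 0 < R) (x : Plane)
    (hMA : ∀ φ : ℝ, ∃ θ : ℝ,
      (∀ θ' : ℝ, Wang V w R x θ' ≤ Wang V w R x θ) ∧ Real.cos (θ - φ) < 0) :
    ∀ x' : Plane, WstarC V w R x ≤ WstarC V w R x' :=
  stmt_11_general V w hw R x hMA
end
end

section
/- Let x₁, x₂ be two points on a line L with W*(x₁) > W*(x₂). Then the half-open segment [x₂, x₁), i.e., the segment from x₁ to x₂ minus {x₁}, intersects the boundary of CH(𝒞(S)) for some S ⊆ V, where S is the set captured by an optimal follower response to x₁; in particular, x₂ ∈ CH(𝒞(S)) and x₁ ∉ CH(𝒞(S)) with W(S) = W*(x₁). -/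
open scoped RealInnerProductSpace
open Pointwise

noncomputable section

/-- if `W*(x₂) < W*(x₁)` and `y` is an optimal follower response to `x₁`
capturing `S`, then `x₁ ∉ CH(𝒞(S))`, `x₂ ∈ CH(𝒞(S))`, and the segment from `x₂` to `x₁`
minus `{x₁}` meets the boundary of `CH(𝒞(S))`. -/
theorem stmt_13 (V : Finset Plane) (w : Plane → ℝ) (hw : ∀ v ∈ V, 0 < w v)
    (R : ℝ) (hR : 0 < R) (x₁ x₂ y : Plane) (hy : R ≤ dist x₁ y)
    (hymax : ∀ y' : Plane, R ≤ dist x₁ y' → Wcap V w x₁ y' ≤ Wcap V w x₁ y)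
    (hlt : ∀ y' : Plane, R ≤ dist x₂ y' → Wcap V w x₂ y' < Wcap V w x₁ y) :
    x₁ ∉ convexHull ℝ
      (⋃ v ∈ {v : Plane | v ∈ V ∧ dist v y < dist v x₁}, Metric.closedBall v (R / 2)) ∧
    x₂ ∈ convexHull ℝ
      (⋃ v ∈ {v : Plane | v ∈ V ∧ dist v y < dist v x₁}, Metric.closedBall v (R / 2)) ∧
    ∃ s ∈ Set.Ico (0 : ℝ) 1, x₂ + s • (x₁ - x₂) ∈ frontier (convexHull ℝ
      (⋃ v ∈ {v : Plane | v ∈ V ∧ dist v y < dist v x₁}, Metric.closedBall v (R / 2))) := by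
  classical
  set S : Set Plane := {v : Plane | v ∈ V ∧ dist v y < dist v x₁} with hSdef
  set K : Set Plane :=
    convexHull ℝ (⋃ v ∈ S, Metric.closedBall v (R / 2)) with hKdef
  have hSfin : S.Finite := V.finite_toSet.subset fun v hv => hv.1
  -- the union as a Minkowski sum
  have hUadd : (⋃ v ∈ S, Metric.closedBall v (R / 2))
      = S + Metric.closedBall (0 : Plane) (R / 2) := by
    ext z
    simp only [Set.mem_iUnion, Set.mem_add, Metric.mem_closedBall, exists_prop]
    constructor
    · rintro ⟨v, hv, hz⟩
      refine ⟨v, hv, z - v, ?_, by abel⟩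
      simpa [dist_eq_norm, dist_eq_norm'] using hz
    · rintro ⟨a, ha, b, hb, rfl⟩
      refine ⟨a, ha, ?_⟩
      simpa [dist_eq_norm] using hb
  have hKconv : Convex ℝ K := convex_convexHull ℝ _
  have hKclosed : IsClosed K := by
    rw [hKdef, hUadd, convexHull_add,
      (convex_closedBall (0 : Plane) (R / 2)).convexHull_eq]
    exact ((hSfin.isCompact_convexHull (𝕜 := ℝ)).add (isCompact_closedBall _ _)).isClosed
  -- key strict separation of the union from x₁ by the bisector halfspace
  have key : ∀ v ∈ S, ∀ z ∈ Metric.closedBall v (R / 2),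
      ⟪y - x₁, x₁⟫ < ⟪y - x₁, z⟫ := by
    intro v hv z hz
    have h1 : dist v y < dist v x₁ := hv.2
    rw [dist_eq_norm, dist_eq_norm] at h1
    have h2 : ‖v - y‖ ^ 2 < ‖v - x₁‖ ^ 2 := by
      nlinarith [norm_nonneg (v - y), norm_nonneg (v - x₁)]
    have hRd : R ≤ ‖y - x₁‖ := by
      rw [dist_eq_norm] at hy
      rwa [norm_sub_rev] at hy
    have hzv : ‖v - z‖ ≤ R / 2 := by
      rw [Metric.mem_closedBall, dist_eq_norm] at hz
      rwa [norm_sub_rev]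
    have cauchy : ⟪y - x₁, v - z⟫ ≤ ‖y - x₁‖ * ‖v - z‖ := real_inner_le_norm _ _
    have e : ‖v - y‖ ^ 2 = ‖v - x₁‖ ^ 2 - 2 * ⟪v - x₁, y - x₁⟫ + ‖y - x₁‖ ^ 2 := by
      have h := norm_sub_sq_real (v - x₁) (y - x₁)
      rwa [sub_sub_sub_cancel_right] at h
    have comm : ⟪v - x₁, y - x₁⟫ = ⟪y - x₁, v - x₁⟫ := real_inner_comm _ _
    have g1 : ⟪y - x₁, z⟫ - ⟪y - x₁, x₁⟫ = ⟪y - x₁, v - x₁⟫ - ⟪y - x₁, v - z⟫ := by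
      simp only [inner_sub_right]; ring
    have hmul : ‖y - x₁‖ * ‖v - z‖ ≤ ‖y - x₁‖ * (R / 2) :=
      mul_le_mul_of_nonneg_left hzv (norm_nonneg _)
    have hmul2 : ‖y - x₁‖ * R ≤ ‖y - x₁‖ * ‖y - x₁‖ :=
      mul_le_mul_of_nonneg_left hRd (norm_nonneg _)
    nlinarith [g1, e, comm, cauchy, hmul, hmul2, h2]
  have hx₁ : x₁ ∉ K := by
    have hsub : K ⊆ {z : Plane | ⟪y - x₁, x₁⟫ < ⟪y - x₁, z⟫} := by
      rw [hKdef]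
      refine convexHull_min ?_ ?_
      · intro z hz
        rw [Set.mem_iUnion₂] at hz
        obtain ⟨v, hv, hzv⟩ := hz
        exact key v hv z hzv
      · exact convex_halfSpace_gt
          ⟨fun a b => inner_add_right _ _ _,
           fun c a => by rw [real_inner_smul_right, smul_eq_mul]⟩ _
    intro h
    have h2 := hsub h
    simp only [Set.mem_setOf_eq] at h2
    exact lt_irrefl _ h2
  -- S is nonempty
  have hSne : S.Nonempty := by
    by_contra h
    rw [Set.not_nonempty_iff_eq_empty] at h
    have h0 : Wcap V w x₁ y = 0 := by
      refine Finset.sum_eq_zero fun v hv => ?_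
      rw [if_neg]
      intro hc
      have : v ∈ S := ⟨hv, hc⟩
      rw [h] at this
      exact this
    have hpt : ‖pt 1 0‖ = 1 := by
      simp [pt, EuclideanSpace.norm_eq, Fin.sum_univ_two]
    have hdist : dist x₂ (x₂ + R • pt 1 0) = R := by
      rw [dist_eq_norm]
      have : x₂ - (x₂ + R • pt 1 0) = -(R • pt 1 0) := by abel
      rw [this, norm_neg, norm_smul, hpt, Real.norm_eq_abs, abs_of_pos hR, mul_one]
    have h1 := hlt (x₂ + R • pt 1 0) (le_of_eq hdist.symm)
    have h2 : 0 ≤ Wcap V w x₂ (x₂ + R • pt 1 0) := by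
      refine Finset.sum_nonneg fun v hv => ?_
      split_ifs
      · exact (hw v hv).le
      · exact le_refl 0
    rw [h0] at h1
    linarith
  -- x₂ ∈ K
  have hx₂ : x₂ ∈ K := by
    by_contra hx₂
    obtain ⟨f, u, hfu, hux⟩ := geometric_hahn_banach_closed_point hKconv hKclosed hx₂
    set g : Plane := (InnerProductSpace.toDual ℝ Plane).symm f with hgdef
    have hg : ∀ z : Plane, ⟪g, z⟫ = f z := fun z => InnerProductSpace.toDual_symm_apply
    obtain ⟨v₀, hv₀⟩ := hSne
    have hv₀K : v₀ ∈ K := by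
      apply subset_convexHull
      refine Set.mem_iUnion₂.mpr ⟨v₀, hv₀, ?_⟩
      exact Metric.mem_closedBall_self (by linarith)
    have hgne : g ≠ 0 := by
      intro h0
      have h1 := hg v₀
      have h2 := hg x₂
      rw [h0] at h1 h2
      simp only [inner_zero_left] at h1 h2
      have := hfu v₀ hv₀K
      rw [← h1] at this
      rw [← h2] at hux
      linarith
    have hgnorm : (0 : ℝ) < ‖g‖ := norm_pos_iff.mpr hgne
    -- key inequality for members of S
    have hkey : ∀ v ∈ S, ⟪g, v⟫ + R / 2 * ‖g‖ < ⟪g, x₂⟫ := by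
      intro v hv
      have hmem : v + (R / 2) • (‖g‖⁻¹ • g) ∈ K := by
        apply subset_convexHull
        refine Set.mem_iUnion₂.mpr ⟨v, hv, ?_⟩
        rw [Metric.mem_closedBall, dist_eq_norm]
        have : v + (R / 2) • (‖g‖⁻¹ • g) - v = (R / 2) • (‖g‖⁻¹ • g) := by abel
        rw [this, norm_smul, norm_smul, Real.norm_eq_abs, Real.norm_eq_abs,
          abs_of_pos (by linarith : (0:ℝ) < R / 2), abs_of_pos (inv_pos.mpr hgnorm),
          inv_mul_cancel₀ (ne_of_gt hgnorm), mul_one]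
      have h1 := hfu _ hmem
      rw [← hg] at h1
      rw [← hg x₂] at hux
      have h2 : ⟪g, v + (R / 2) • (‖g‖⁻¹ • g)⟫ = ⟪g, v⟫ + R / 2 * ‖g‖ := by
        rw [inner_add_right, real_inner_smul_right, real_inner_smul_right,
          real_inner_self_eq_norm_sq]
        field_simp
      rw [h2] at h1
      linarith
    set y' : Plane := x₂ - R • (‖g‖⁻¹ • g) with hy'def
    have hdisty' : dist x₂ y' = R := by
      rw [dist_eq_norm]
      have : x₂ - y' = R • (‖g‖⁻¹ • g) := by rw [hy'def]; abel
      rw [this, norm_smul, norm_smul, Real.norm_eq_abs, Real.norm_eq_abs,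
        abs_of_pos hR, abs_of_pos (inv_pos.mpr hgnorm),
        inv_mul_cancel₀ (ne_of_gt hgnorm), mul_one]
    have hcap : ∀ v ∈ S, dist v y' < dist v x₂ := by
      intro v hv
      rw [dist_eq_norm, dist_eq_norm]
      have hvy : v - y' = (v - x₂) + R • (‖g‖⁻¹ • g) := by rw [hy'def]; abel
      have hexp : ‖v - y'‖ ^ 2
          = ‖v - x₂‖ ^ 2 + 2 * ⟪v - x₂, R • (‖g‖⁻¹ • g)⟫ + ‖R • (‖g‖⁻¹ • g)‖ ^ 2 := by
        rw [hvy]; exact norm_add_sq_real _ _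
      have hnrm : ‖R • (‖g‖⁻¹ • g)‖ = R := by
        rw [norm_smul, norm_smul, Real.norm_eq_abs, Real.norm_eq_abs,
          abs_of_pos hR, abs_of_pos (inv_pos.mpr hgnorm),
          inv_mul_cancel₀ (ne_of_gt hgnorm), mul_one]
      have hinn : ⟪v - x₂, R • (‖g‖⁻¹ • g)⟫ = R * ‖g‖⁻¹ * (⟪g, v⟫ - ⟪g, x₂⟫) := by
        rw [real_inner_smul_right, real_inner_smul_right, inner_sub_left,
          real_inner_comm v g, real_inner_comm x₂ g]
        ring
      have hklt := hkey v hv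
      have hq : ⟪g, v⟫ - ⟪g, x₂⟫ < -(R / 2 * ‖g‖) := by linarith
      have hRg : 0 < R * ‖g‖⁻¹ := mul_pos hR (inv_pos.mpr hgnorm)
      have h3 : R * ‖g‖⁻¹ * (⟪g, v⟫ - ⟪g, x₂⟫) < R * ‖g‖⁻¹ * (-(R / 2 * ‖g‖)) :=
        mul_lt_mul_of_pos_left hq hRg
      have h4 : R * ‖g‖⁻¹ * (-(R / 2 * ‖g‖)) = -(R ^ 2 / 2) := by
        field_simp
      have h5 : ‖v - y'‖ ^ 2 < ‖v - x₂‖ ^ 2 := by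
        rw [hexp, hnrm, hinn]
        nlinarith [h3, h4]
      exact lt_of_pow_lt_pow_left₀ 2 (norm_nonneg _) h5
    have hle : Wcap V w x₁ y ≤ Wcap V w x₂ y' := by
      refine Finset.sum_le_sum fun v hv => ?_
      by_cases hc : dist v y < dist v x₁
      · rw [if_pos hc, if_pos (hcap v ⟨hv, hc⟩)]
      · rw [if_neg hc]
        split_ifs
        · exact (hw v hv).le
        · exact le_refl 0
    exact absurd (hlt y' (le_of_eq hdisty'.symm)) (not_lt.mpr hle)
  refine ⟨hx₁, hx₂, ?_⟩
  -- the boundary-crossing point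
  set γ : ℝ → Plane := fun t => x₂ + t • (x₁ - x₂) with hγdef
  have hγcont : Continuous γ := by
    apply Continuous.add continuous_const
    exact (continuous_id.smul continuous_const)
  set T : Set ℝ := Set.Icc (0 : ℝ) 1 ∩ γ ⁻¹' K with hTdef
  have hTclosed : IsClosed T := isClosed_Icc.inter (hKclosed.preimage hγcont)
  have h0T : (0 : ℝ) ∈ T := by
    constructor
    · exact ⟨le_refl 0, zero_le_one⟩
    · show γ 0 ∈ K
      simpa [hγdef] using hx₂
  have hTne : T.Nonempty := ⟨0, h0T⟩
  have hTbdd : BddAbove T := ⟨1, fun t ht => ht.1.2⟩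
  set s : ℝ := sSup T with hsdef
  have hsT : s ∈ T := hTclosed.csSup_mem hTne hTbdd
  have hs0 : 0 ≤ s := hsT.1.1
  have hs1 : s ≤ 1 := hsT.1.2
  have hγ1 : γ 1 = x₁ := by simp [hγdef]
  have hγsK : γ s ∈ K := hsT.2
  have hslt1 : s < 1 := by
    rcases lt_or_eq_of_le hs1 with h | h
    · exact h
    · exfalso
      rw [h] at hγsK
      rw [hγ1] at hγsK
      exact hx₁ hγsK
  have hnotint : γ s ∉ interior K := by
    intro hint
    have hnb : γ ⁻¹' interior K ∈ nhds s :=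
      hγcont.continuousAt.preimage_mem_nhds (isOpen_interior.mem_nhds hint)
    obtain ⟨δ, hδ, hball⟩ := Metric.mem_nhds_iff.mp hnb
    set t : ℝ := min (s + δ / 2) 1 with htdef
    have hst : s < t := lt_min (by linarith) hslt1
    have htT : t ∈ T := by
      constructor
      · exact ⟨le_trans hs0 hst.le, min_le_right _ _⟩
      · have : t ∈ Metric.ball s δ := by
          rw [Metric.mem_ball, Real.dist_eq, abs_of_pos (by linarith : (0:ℝ) < t - s)]
          have : t ≤ s + δ / 2 := min_le_left _ _
          linarith
        show γ t ∈ K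
        exact interior_subset (show γ t ∈ interior K from hball this)
    have : t ≤ s := le_csSup hTbdd htT
    linarith
  exact ⟨s, ⟨hs0, hslt1⟩, subset_closure hγsK, hnotint⟩
end
end

section
/- Fix a point v and a ray direction: for the family of 'right' outer tangent lines T_r(v, v_i) of the two disks of radius r = R/2 centered at v and at v_i (v_i ranging over points with polar angle w.r.t. v in an open half-circle (θ_L, θ_L + π), where θ_L is the upward direction of a vertical line L not intersecting the disk around v), the intersection points of these tangent lines with L are ordered by decreasing y-coordinate exactly according to the counterclockwise order of the polar angles of the v_i with respect to v. -/
/-!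
With `a = v 0 - c`, the right tangent line of angle `θ` meets `L` at height
`v 1 - (r + a sin θ) / cos θ`. On `(π/2, 3π/2)` the function `θ ↦ (r + a sin θ) / cos θ` has
derivative `(a + r sin θ) / cos² θ`, which is positive because `a > r`; so the height strictly
decreases with `θ`.
-/

open scoped RealInnerProductSpace

noncomputable section

open Real Set

lemma cos_neg_of_mem_Ioo {θ : ℝ} (hθ : θ ∈ Ioo (π / 2) (3 * π / 2)) : cos θ < 0 :=
  cos_neg_of_pi_div_two_lt_of_lt hθ.1 (by linarith [hθ.2])

lemma line_inter_vertical_snd {r c θ s : ℝ} {v p : Plane} (hcos : cos θ ≠ 0)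
    (hp : p = v + r • pt (sin θ) (-cos θ) + s • dir θ) (hpL : p 0 = c) :
    p 1 = v 1 - (r + (v 0 - c) * sin θ) / cos θ := by
  have hp0 : p 0 = v 0 + r * sin θ + s * cos θ := by
    simp [hp, pt, dir]
  have hp1 : p 1 = v 1 - r * cos θ + s * sin θ := by
    simp [hp, pt, dir, sub_eq_add_neg]
  have hs : s * cos θ = c - v 0 - r * sin θ := by linarith
  rw [hp1]
  field_simp
  linear_combination sin θ * hs - r * sin_sq_add_cos_sq θ

lemma strictMonoOn_tangent_height {r a : ℝ} (hra : |r| < a) :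
    StrictMonoOn (fun θ => (r + a * sin θ) / cos θ) (Ioo (π / 2) (3 * π / 2)) := by
  have hcos : ∀ θ ∈ Ioo (π / 2) (3 * π / 2), cos θ ≠ 0 := fun θ hθ =>
    (cos_neg_of_mem_Ioo hθ).ne
  refine strictMonoOn_of_deriv_pos (convex_Ioo _ _) ?_ fun θ hθ => ?_
  · exact ((continuous_const.add (continuous_const.mul continuous_sin)).continuousOn).div
      continuous_cos.continuousOn hcos
  rw [interior_Ioo] at hθ
  have hderiv : HasDerivAt (fun θ => (r + a * sin θ) / cos θ)
      ((a + r * sin θ) / cos θ ^ 2) θ := by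
    refine (((hasDerivAt_sin θ).const_mul a).const_add r |>.div (hasDerivAt_cos θ)
      (hcos θ hθ)).congr_deriv ?_
    congr 1
    linear_combination a * sin_sq_add_cos_sq θ
  rw [hderiv.deriv]
  have hr_sin : |r * sin θ| ≤ |r| := by
    rw [abs_mul]
    exact mul_le_of_le_one_right (abs_nonneg r) (abs_sin_le_one θ)
  have hpos : 0 < a + r * sin θ := by linarith [neg_abs_le (r * sin θ)]
  exact div_pos hpos (sq_pos_of_ne_zero (hcos θ hθ))

theorem stmt_18_general (r : ℝ) (hr : 0 < r) (c : ℝ) (v : Plane) (hv : r < v 0 - c)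
    (vi vj : Plane) (ρi ρj θi θj : ℝ)
    (hθi : θi ∈ Set.Ioo (Real.pi / 2) (3 * Real.pi / 2))
    (hθj : θj ∈ Set.Ioo (Real.pi / 2) (3 * Real.pi / 2))
    (hij : θi < θj)
    (hvi : vi = v + ρi • dir θi) (hvj : vj = v + ρj • dir θj)
    (p q : Plane)
    (hp : ∃ s : ℝ, p = v + r • pt (Real.sin θi) (-Real.cos θi) + s • (vi - v))
    (hpL : p 0 = c)
    (hq : ∃ s : ℝ, q = v + r • pt (Real.sin θj) (-Real.cos θj) + s • (vj - v))
    (hqL : q 0 = c) :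
    q 1 < p 1 := by
  obtain ⟨s, rfl⟩ := hp
  obtain ⟨t, rfl⟩ := hq
  rw [hvi, add_sub_cancel_left, smul_smul] at hpL ⊢
  rw [hvj, add_sub_cancel_left, smul_smul] at hqL ⊢
  rw [line_inter_vertical_snd (cos_neg_of_mem_Ioo hθi).ne rfl hpL,
    line_inter_vertical_snd (cos_neg_of_mem_Ioo hθj).ne rfl hqL]
  have hra : |r| < v 0 - c := by rwa [abs_of_pos hr]
  linarith [strictMonoOn_tangent_height hra hθi hθj hij]

/-- ordering of intersections of right outer tangent lines with a vertical
line `L = {p | p.x = c}` disjoint from the disk around `v` (which is strictly to the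
right of `L`): for polar angles `θi < θj` in the open half-circle `(π/2, 3π/2)`,
the tangent line for `vi` meets `L` strictly above that for `vj`. -/
theorem stmt_18 (r : ℝ) (hr : 0 < r) (c : ℝ) (v : Plane) (hv : r < v 0 - c)
    (vi vj : Plane) (ρi ρj θi θj : ℝ) (hρi : 0 < ρi) (hρj : 0 < ρj)
    (hθi : θi ∈ Set.Ioo (Real.pi / 2) (3 * Real.pi / 2))
    (hθj : θj ∈ Set.Ioo (Real.pi / 2) (3 * Real.pi / 2))
    (hij : θi < θj)
    (hvi : vi = v + ρi • dir θi) (hvj : vj = v + ρj • dir θj)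
    (p q : Plane)
    (hp : ∃ s : ℝ, p = v + r • pt (Real.sin θi) (-Real.cos θi) + s • (vi - v))
    (hpL : p 0 = c)
    (hq : ∃ s : ℝ, q = v + r • pt (Real.sin θj) (-Real.cos θj) + s • (vj - v))
    (hqL : q 0 = c) :
    q 1 < p 1 :=
  stmt_18_general r hr c v hv vi vj ρi ρj θi θj hθi hθj hij hvi hvj p q hp hpL hq hqL
end
end

section
/- Suppose x lies on vertical line L, is not a strong centroid (its covering arc span ≤ π), Wedge(x) is upward (CA(x) ⊆ (0,π)), and θ is an angle in [π, 2π] such that the closed half-plane H(B(x,θ), y(x,θ)) beyond the bisector has weight ≥ W₁ ≥ W*(x). Define PW(x) = Wedge(x) ∩ H(F(x,θ), y(x,θ)). Then every point x' ∉ PW(x) satisfies W*(x') ≥ W*(x). -/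
open scoped RealInnerProductSpace

noncomputable section

/-! The follower at angle `t` captures the open half-plane `{v | R / 2 < ⟪v - x, dir t⟫}` beyond
the bisector. Moving the leader to `x'` with `⟪x' - x, dir t⟫ ≤ 0` only enlarges it (and when the
inequality is strict, even the closed half-plane at `x` lies inside the open one at `x'`), so every
capture available at `x` remains available at `x'`.

If `x'` leaves the wedge across the boundary direction `θb` (or `θe`), then `⟪x' - x, dir t⟫ < 0`
persists for angles `t` near `θb`, and among these is a maximising angle of `x`. If `x'` lies strictly
beyond `F(x, θ)`, then `x'` captures the whole closed half-plane beyond `B(x, θ)`, whose weight is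
at least `W₁ ≥ W*(x)`. -/

open Filter Topology

section InnerProductSpace

variable {E : Type*} [NormedAddCommGroup E] [InnerProductSpace ℝ E]

lemma dist_add_smul_sq {u : E} (hu : ‖u‖ = 1) (v z : E) (R : ℝ) :
    dist v (z + R • u) ^ 2 = dist v z ^ 2 - 2 * R * ⟪v - z, u⟫ + R ^ 2 := by
  rw [dist_eq_norm, dist_eq_norm, sub_add_eq_sub_sub, norm_sub_sq_real, real_inner_smul_right,
    norm_smul, hu, Real.norm_eq_abs, mul_one, sq_abs]
  ring

lemma dist_add_smul_lt_iff {u : E} (hu : ‖u‖ = 1) (v z : E) {R : ℝ} (hR : 0 < R) :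
    dist v (z + R • u) < dist v z ↔ R / 2 < ⟪v - z, u⟫ := by
  rw [← sq_lt_sq₀ dist_nonneg dist_nonneg, dist_add_smul_sq hu]
  constructor <;> intro h <;> nlinarith

lemma dist_add_smul_le_iff {u : E} (hu : ‖u‖ = 1) (v z : E) {R : ℝ} (hR : 0 < R) :
    dist v (z + R • u) ≤ dist v z ↔ R / 2 ≤ ⟪v - z, u⟫ := by
  rw [← sq_le_sq₀ dist_nonneg dist_nonneg, dist_add_smul_sq hu]
  constructor <;> intro h <;> nlinarith

end InnerProductSpace

lemma Finset.sum_ite_le_sum_ite {ι M : Type*} [AddCommMonoid M] [Preorder M] [AddLeftMono M]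
    {s : Finset ι} {w : ι → M} {p q : ι → Prop}
    [DecidablePred p] [DecidablePred q] (hw : ∀ i ∈ s, 0 ≤ w i) (hpq : ∀ i ∈ s, p i → q i) :
    (∑ i ∈ s, if p i then w i else 0) ≤ ∑ i ∈ s, if q i then w i else 0 := by
  simp only [← Finset.sum_filter]
  exact Finset.sum_le_sum_of_subset_of_nonneg (Finset.monotone_filter_right s hpq)
    fun i hi _ => hw i (Finset.mem_filter.1 hi).1

lemma frequently_nhds_of_forall_exists_Ioo {P : ℝ → Prop} {a : ℝ}
    (h : ∀ ε > 0, ∃ t ∈ Set.Ioo (a - ε) (a + ε), P t) : ∃ᶠ t in 𝓝 a, P t :=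
  Metric.nhds_basis_ball.frequently_iff.2 fun ε hε => by simpa only [Real.ball_eq_Ioo] using h ε hε

lemma norm_dir (θ : ℝ) : ‖dir θ‖ = 1 := by
  simp [dir, pt, EuclideanSpace.norm_eq, Fin.sum_univ_two]

lemma continuous_dir : Continuous dir := by
  unfold dir pt
  exact (PiLp.continuous_toLp 2 _).comp (continuous_pi fun i => by fin_cases i <;> simp <;> fun_prop)

section Capture

variable {V : Finset Plane} {w : Plane → ℝ} {R : ℝ}

lemma Wang_le_WstarC (x : Plane) (t : ℝ) : Wang V w R x t ≤ WstarC V w R x := by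
  refine le_csSup ⟨∑ v ∈ V, |w v|, ?_⟩ ⟨t, rfl⟩
  rintro _ ⟨s, rfl⟩
  exact Finset.sum_le_sum fun v _ => by split_ifs <;> simp [le_abs_self]

lemma Wang_le_Wang_of_inner_nonpos (hw : ∀ v ∈ V, 0 ≤ w v) (hR : 0 < R) {x x' : Plane} {t : ℝ}
    (h : ⟪x' - x, dir t⟫ ≤ 0) : Wang V w R x t ≤ Wang V w R x' t := by
  refine Finset.sum_ite_le_sum_ite hw fun v _ hv => ?_
  rw [dist_add_smul_lt_iff (norm_dir t) _ _ hR] at hv ⊢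
  rw [← sub_sub_sub_cancel_right v x' x, inner_sub_left]
  linarith

lemma WstarC_le_WstarC_of_Wang_eq (hw : ∀ v ∈ V, 0 ≤ w v) (hR : 0 < R) {x x' : Plane} {t : ℝ}
    (ht : Wang V w R x t = WstarC V w R x) (h : ⟪x' - x, dir t⟫ ≤ 0) :
    WstarC V w R x ≤ WstarC V w R x' :=
  ht ▸ (Wang_le_Wang_of_inner_nonpos hw hR h).trans (Wang_le_WstarC x' t)

lemma WstarC_le_WstarC_of_frequently (hw : ∀ v ∈ V, 0 ≤ w v) (hR : 0 < R) {x x' : Plane} {a : ℝ}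
    (hmax : ∃ᶠ t in 𝓝 a, Wang V w R x t = WstarC V w R x) (ha : ⟪x' - x, dir a⟫ < 0) :
    WstarC V w R x ≤ WstarC V w R x' := by
  have hneg : ∀ᶠ t in 𝓝 a, ⟪x' - x, dir t⟫ < 0 :=
    (continuous_const.inner continuous_dir).continuousAt.eventually_lt continuousAt_const ha
  obtain ⟨t, ht, htneg⟩ := (hmax.and_eventually hneg).exists
  exact WstarC_le_WstarC_of_Wang_eq hw hR ht htneg.le

lemma sum_closedHalfPlane_le_WstarC (hw : ∀ v ∈ V, 0 ≤ w v) (hR : 0 < R) {x x' : Plane} {t : ℝ}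
    (h : ⟪x' - x, dir t⟫ < 0) :
    (∑ v ∈ V, if dist v (x + R • dir t) ≤ dist v x then w v else 0) ≤ WstarC V w R x' := by
  refine le_trans (Finset.sum_ite_le_sum_ite hw fun v _ hv => ?_) (Wang_le_WstarC x' t)
  rw [dist_add_smul_le_iff (norm_dir t) _ _ hR] at hv
  rw [dist_add_smul_lt_iff (norm_dir t) _ _ hR, ← sub_sub_sub_cancel_right v x' x, inner_sub_left]
  linarith

end Capture

theorem stmt_19_general (V : Finset Plane) (w : Plane → ℝ) (hw : ∀ v ∈ V, 0 < w v)
    (R : ℝ) (hR : 0 < R) (x : Plane) (θb θe : ℝ)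
    (hminb : ∀ ε > (0 : ℝ), ∃ θ' ∈ Set.Ioo θb (θb + ε), Wang V w R x θ' = WstarC V w R x)
    (hmine : ∀ ε > (0 : ℝ), ∃ θ' ∈ Set.Ioo (θe - ε) θe, Wang V w R x θ' = WstarC V w R x)
    (θ : ℝ) (W₁ : ℝ)
    (hW₁ : W₁ ≤ ∑ v ∈ V, if dist v (x + R • dir θ) ≤ dist v x then w v else 0)
    (hW₁' : WstarC V w R x ≤ W₁)
    (x' : Plane)
    (hx' : ¬ (0 ≤ ⟪x' - x, dir θb⟫ ∧ 0 ≤ ⟪x' - x, dir θe⟫ ∧ 0 ≤ ⟪x' - x, dir θ⟫)) :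
    WstarC V w R x ≤ WstarC V w R x' := by
  have hw₀ : ∀ v ∈ V, 0 ≤ w v := fun v hv => (hw v hv).le
  simp only [not_and_or, not_le] at hx'
  rcases hx' with hb' | he' | hθ'
  · refine WstarC_le_WstarC_of_frequently hw₀ hR (frequently_nhds_of_forall_exists_Ioo
      fun ε hε => ?_) hb'
    obtain ⟨t, ht, hmax⟩ := hminb ε hε
    exact ⟨t, Set.Ioo_subset_Ioo_left (by linarith) ht, hmax⟩
  · refine WstarC_le_WstarC_of_frequently hw₀ hR (frequently_nhds_of_forall_exists_Ioo
      fun ε hε => ?_) he'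
    obtain ⟨t, ht, hmax⟩ := hmine ε hε
    exact ⟨t, Set.Ioo_subset_Ioo_right (by linarith) ht, hmax⟩
  · exact hW₁'.trans (hW₁.trans (sum_closedHalfPlane_le_WstarC hw₀ hR hθ'))

/-- pseudo-wedge pruning. With `Wedge(x)` upward (endpoints
`θb, θe` of the minimal covering arc `CA(x) ⊆ (0,π)`), and `θ ∈ [π,2π]` such that the
closed half-plane beyond the bisector `B(x,θ)` has weight at least `W₁ ≥ W*(x)`,
every point `x'` outside `PW(x) = Wedge(x) ∩ H(F(x,θ), y(x,θ))` has `W*(x') ≥ W*(x)`. -/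
theorem stmt_19 (V : Finset Plane) (w : Plane → ℝ) (hw : ∀ v ∈ V, 0 < w v)
    (R : ℝ) (hR : 0 < R) (x : Plane) (θb θe : ℝ)
    (hb : 0 ≤ θb) (he : θe ≤ Real.pi) (hlt : θb < θe)
    (hcover : ∀ θ' ∈ Set.Ico (0 : ℝ) (2 * Real.pi),
      Wang V w R x θ' = WstarC V w R x → θ' ∈ Set.Ioo θb θe)
    (hminb : ∀ ε > (0 : ℝ), ∃ θ' ∈ Set.Ioo θb (θb + ε), Wang V w R x θ' = WstarC V w R x)
    (hmine : ∀ ε > (0 : ℝ), ∃ θ' ∈ Set.Ioo (θe - ε) θe, Wang V w R x θ' = WstarC V w R x)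
    (θ : ℝ) (hθ : θ ∈ Set.Icc Real.pi (2 * Real.pi)) (W₁ : ℝ)
    (hW₁ : W₁ ≤ ∑ v ∈ V, if dist v (x + R • dir θ) ≤ dist v x then w v else 0)
    (hW₁' : WstarC V w R x ≤ W₁)
    (x' : Plane)
    (hx' : ¬ (0 ≤ ⟪x' - x, dir θb⟫ ∧ 0 ≤ ⟪x' - x, dir θe⟫ ∧ 0 ≤ ⟪x' - x, dir θ⟫)) :
    WstarC V w R x ≤ WstarC V w R x' :=
  stmt_19_general V w hw R hR x θb θe hminb hmine θ W₁ hW₁ hW₁' x' hx'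
end
end
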